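/- arXiv:0805.3494 — 3 statements merged into one kernel-verified Lean document; each statement's English description precedes it below -/
import Mathlib

section
/- If A is a set of non-negative real numbers satisfying the descending chain condition (every strictly decreasing sequence in A is finite), then the set A_∞ = {0} ∪ ⋃_{n≥1} {a_1 + ... + a_n : a_i ∈ A} also satisfies the descending chain condition. -/
/-! Over `ℝ` the descending chain condition is well-foundedness, hence partial well-order.
The additive submonoid generated by a partially well-ordered set of non-negative elements is
again partially well-ordered (Higman's lemma, in Mathlib as `Set.IsPWO.addSubmonoid_closure`),
and `Ainf A` is contained in that submonoid. -/

/-- A set of reals satisfies the descending chain condition if it contains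
no infinite strictly decreasing sequence. -/
def DCC (A : Set ℝ) : Prop := ∀ f : ℕ → ℝ, (∀ n, f n ∈ A) → ¬ StrictAnti f

/-- `Ainf A` is `{0}` together with all finite sums of elements of `A`. -/
def Ainf (A : Set ℝ) : Set ℝ :=
  {0} ∪ {x | ∃ n : ℕ, 0 < n ∧ ∃ g : Fin n → ℝ, (∀ i, g i ∈ A) ∧ x = ∑ i, g i}

theorem dcc_iff_isWF {A : Set ℝ} : DCC A ↔ A.IsWF := by
  rw [Set.isWF_iff_no_descending_seq]
  exact ⟨fun h f hf hA => h f hA hf, fun h f hA hf => h f hf hA⟩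

theorem Ainf_subset_addSubmonoidClosure (A : Set ℝ) :
    Ainf A ⊆ AddSubmonoid.closure A := by
  rintro x (rfl | ⟨n, -, g, hg, rfl⟩)
  · exact zero_mem _
  · exact sum_mem fun i _ => AddSubmonoid.subset_closure (hg i)

theorem dcc_of_sumset (A : Set ℝ) (hA : ∀ x ∈ A, (0:ℝ) ≤ x) (h : DCC A) :
    DCC (Ainf A) :=
  dcc_iff_isWF.2 <| ((dcc_iff_isWF.1 h).isPWO.addSubmonoid_closure hA).isWF.mono
    (Ainf_subset_addSubmonoidClosure A)
end

section
/- Let A ⊆ (0,1) be a set of rational numbers satisfying the descending chain condition. Then there exists a positive integer N = N(A) such that for every finite collection a_1, ..., a_n of elements of A with a_1 + ... + a_n > 2, one has -2N + Σ_{i=1}^n ⌊N a_i⌋ > 0. -/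
/-!
Finite sums of elements of a DCC set of positive reals again satisfy the DCC, so those
exceeding `2` do so by at least some gap `δ > 0`, and the elements of `A` are bounded below
by some `m > 0`. Since `⌊N a⌋ ≥ N a - 1 ≥ (N - 1/m) a`, a family with `∑ aᵢ ≥ 2 + δ` has
`∑ ⌊N aᵢ⌋ ≥ (N - 1/m)(2 + δ)`, which exceeds `2N` as soon as `N > (2 + δ)/(m δ)`.
-/

open Finset

lemma DCC.isWF {A : Set ℝ} (h : DCC A) : A.IsWF :=
  Set.isWF_iff_no_descending_seq.2 fun f hf hmem => h f hmem hf

lemma DCC.isWF_addSubmonoid_closure {A : Set ℝ} (h : DCC A) (hA : ∀ x ∈ A, 0 ≤ x) :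
    (AddSubmonoid.closure A : Set ℝ).IsWF :=
  (Set.IsPWO.addSubmonoid_closure hA h.isWF.isPWO).isWF

lemma Set.IsWF.exists_pos_add_le {S : Set ℝ} (hS : S.IsWF) (b : ℝ) :
    ∃ δ > 0, ∀ x ∈ S, b < x → b + δ ≤ x := by
  have hT : (S ∩ Set.Ioi b).IsWF := hS.mono Set.inter_subset_left
  rcases (S ∩ Set.Ioi b).eq_empty_or_nonempty with hempty | hne
  · exact ⟨1, one_pos, fun x hx hbx => (hempty.subset ⟨hx, hbx⟩).elim⟩
  · refine ⟨hT.min hne - b, sub_pos.2 (hT.min_mem hne).2, fun x hx hbx => ?_⟩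
    have := hT.min_le hne ⟨hx, hbx⟩
    linarith

lemma sub_inv_mul_le_floor_mul {m a : ℝ} (hm : 0 < m) (hma : m ≤ a) (x : ℝ) :
    (x - m⁻¹) * a ≤ ⌊x * a⌋ := by
  have hfloor := Int.sub_one_lt_floor (x * a)
  have hone : 1 ≤ m⁻¹ * a := by rwa [← div_eq_inv_mul, one_le_div hm]
  nlinarith

lemma mul_lt_sum_floor_mul {ι : Type*} (s : Finset ι) (a : ι → ℝ) {m δ b N : ℝ}
    (hm : 0 < m) (hδ : 0 < δ) (hb : 0 ≤ b) (hma : ∀ i ∈ s, m ≤ a i)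
    (hsum : b + δ ≤ ∑ i ∈ s, a i) (hN : (b + δ) / (m * δ) < N) :
    b * N < ∑ i ∈ s, (⌊N * a i⌋ : ℝ) := by
  have hNmδ : b + δ < N * (m * δ) := (div_lt_iff₀ (by positivity)).1 hN
  have hm_inv : m * m⁻¹ = 1 := mul_inv_cancel₀ hm.ne'
  have hN_pos : 0 ≤ N - m⁻¹ := by
    have : 0 < m * (N - m⁻¹) := by nlinarith
    exact (pos_of_mul_pos_right this hm.le).le
  calc b * N < (N - m⁻¹) * (b + δ) := by
        have : 0 < m * ((N - m⁻¹) * (b + δ) - b * N) := by nlinarith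
        linarith [pos_of_mul_pos_right this hm.le]
    _ ≤ (N - m⁻¹) * ∑ i ∈ s, a i := mul_le_mul_of_nonneg_left hsum hN_pos
    _ = ∑ i ∈ s, (N - m⁻¹) * a i := mul_sum _ _ _
    _ ≤ ∑ i ∈ s, (⌊N * a i⌋ : ℝ) :=
        sum_le_sum fun i hi => sub_inv_mul_le_floor_mul hm (hma i hi) N

theorem exists_N_round_down_general (A : Set ℝ) (hA : A ⊆ Set.Ioo 0 1) (h : DCC A) :
    ∃ N : ℕ, 0 < N ∧ ∀ (n : ℕ) (a : Fin n → ℝ), (∀ i, a i ∈ A) →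
      2 < ∑ i, a i → 0 < -2 * (N : ℤ) + ∑ i, ⌊(N : ℝ) * a i⌋ := by
  have hM : (AddSubmonoid.closure A : Set ℝ).IsWF := h.isWF_addSubmonoid_closure fun x hx => (hA hx).1.le
  obtain ⟨m, hm, hmM⟩ := hM.exists_pos_add_le 0
  obtain ⟨δ, hδ, hδM⟩ := hM.exists_pos_add_le 2
  obtain ⟨N, hN⟩ := exists_nat_gt ((2 + δ) / (m * δ))
  have hN_pos : (0 : ℝ) < N := lt_trans (by positivity) hN
  refine ⟨N, Nat.cast_pos.1 hN_pos, fun n a ha hsum => ?_⟩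
  have hmA : ∀ i ∈ univ, m ≤ a i := fun i _ => by
    simpa using hmM (a i) (AddSubmonoid.subset_closure (ha i)) (hA (ha i)).1
  have hgap : 2 + δ ≤ ∑ i, a i :=
    hδM _ (AddSubmonoid.sum_mem _ fun i _ => AddSubmonoid.subset_closure (ha i)) hsum
  have key : 2 * (N : ℤ) < ∑ i, ⌊(N : ℝ) * a i⌋ := by
    exact_mod_cast mul_lt_sum_floor_mul univ a hm hδ zero_le_two hmA hgap hN
  linarith

theorem exists_N_round_down (A : Set ℝ) (hA : A ⊆ Set.Ioo 0 1)
    (hQ : ∀ x ∈ A, ∃ q : ℚ, x = (q : ℝ)) (h : DCC A) :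
    ∃ N : ℕ, 0 < N ∧ ∀ (n : ℕ) (a : Fin n → ℝ), (∀ i, a i ∈ A) →
      2 < ∑ i, a i → 0 < -2 * (N : ℤ) + ∑ i, ⌊(N : ℝ) * a i⌋ :=
  exists_N_round_down_general A hA h
end

section
/- Let F = ℙ¹ and let Δ be an effective ℚ-divisor on F with ⌊Δ⌋ = 0 and K_F + Δ ∼_ℚ 0 (i.e., deg Δ = 2). Let m be a positive integer with mΔ integral. Then Σ_{i=0}^{m-1} h^0(F, ω_F^{1-i}(-⌊iΔ⌋)) ≤ (m-1)². In other words, Σ_{i=0}^{m-1} h^0(ℙ¹, O(2i - 2 - deg⌊iΔ⌋)) ≤ (m-1)². -/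
/-!
Since `Δ` is effective, `⌊iΔ⌋ ≥ 0`, so each summand is at most
`h⁰(ℙ¹, ω^{1-i}) = h⁰(ℙ¹, 𝒪(2i - 2)) = max 0 (2i - 1)`, and these odd numbers sum to `(m - 1)²`.
-/

open Finset

theorem sum_range_succ_max_zero_two_mul_sub_one (n : ℕ) :
    ∑ i ∈ range (n + 1), max 0 (2 * (i : ℤ) - 1) = (n : ℤ) ^ 2 := by
  induction n with
  | zero => simp
  | succ n ih =>
    rw [sum_range_succ, ih, max_eq_right (by omega)]
    push_cast
    ring

theorem sum_floor_mul_nonneg {ι : Type*} [Fintype ι] {d : ι → ℝ} (hd : ∀ j, 0 ≤ d j) {t : ℝ}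
    (ht : 0 ≤ t) : 0 ≤ ∑ j, ⌊t * d j⌋ :=
  sum_nonneg fun j _ ↦ Int.floor_nonneg.2 (mul_nonneg ht (hd j))

theorem genus_bound_cyclic_cover_general (m r : ℕ) (d : Fin r → ℝ)
    (hd : ∀ j, d j ∈ Set.Ioo (0:ℝ) 1) :
    ∑ i ∈ Finset.range m,
        max 0 (2 * (i : ℤ) - 1 - ∑ j, ⌊(i : ℝ) * d j⌋) ≤ ((m : ℤ) - 1) ^ 2 := by
  have hterm (i : ℕ) :
      max 0 (2 * (i : ℤ) - 1 - ∑ j, ⌊(i : ℝ) * d j⌋) ≤ max 0 (2 * (i : ℤ) - 1) :=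
    max_le_max_left 0 <| sub_le_self _ <|
      sum_floor_mul_nonneg (fun j ↦ (hd j).1.le) (Nat.cast_nonneg i)
  rcases m with _ | n
  · simp
  · calc _ ≤ ∑ i ∈ range (n + 1), max 0 (2 * (i : ℤ) - 1) := sum_le_sum fun i _ ↦ hterm i
      _ = _ := by rw [sum_range_succ_max_zero_two_mul_sub_one]; push_cast; ring

theorem genus_bound_cyclic_cover (m r : ℕ) (hm : 1 ≤ m) (d : Fin r → ℝ)
    (hd : ∀ j, d j ∈ Set.Ioo (0:ℝ) 1) (hsum : ∑ j, d j = 2)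
    (hint : ∀ j, ∃ z : ℤ, (m : ℝ) * d j = (z : ℝ)) :
    ∑ i ∈ Finset.range m,
        max 0 (2 * (i : ℤ) - 1 - ∑ j, ⌊(i : ℝ) * d j⌋) ≤ ((m : ℤ) - 1) ^ 2 :=
  genus_bound_cyclic_cover_general m r d hd
end
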